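/- arXiv:1604.02968 — 5 statements merged into one kernel-verified Lean document; each statement's English description precedes it below -/
import Mathlib

section
/- For every real α ∈ (0,1) and every positive integer k there exists ε₀ > 0 such that for all ε with 0 < ε < ε₀ one has (1 − α(1+ε)) / (1 − α(1 − ε^{1/k})^k) > 1 − ε^{1/(k+1)}. -/
open Filter Topology

set_option maxHeartbeats 1000000 in
/-- For every `α ∈ (0,1)` and every positive integer `k` there exists `ε₀ > 0` such that
for all `0 < ε < ε₀`,
`(1 - α(1+ε)) / (1 - α(1 - ε^{1/k})^k) > 1 - ε^{1/(k+1)}`. -/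
theorem lemma_ineq (α : ℝ) (hα : α ∈ Set.Ioo (0:ℝ) 1) (k : ℕ) (hk : 0 < k) :
    ∃ ε₀ : ℝ, 0 < ε₀ ∧ ∀ ε : ℝ, 0 < ε → ε < ε₀ →
      (1 - α * (1 + ε)) / (1 - α * (1 - ε ^ ((1:ℝ)/(k:ℝ)))^k)
        > 1 - ε ^ ((1:ℝ)/((k:ℝ)+1)) := by
  obtain ⟨hα0, hα1⟩ := hα
  have hcpos : 0 < 1 - α := by linarith
  set t := min ((1 - α) / (((k:ℝ)+1) * α)) 1 with htdef
  have hk0 : (0:ℝ) < k := Nat.cast_pos.mpr hk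
  have hk1 : (1:ℝ) ≤ k := Nat.one_le_cast.mpr hk
  have ht0 : 0 < t := lt_min (div_pos hcpos (by positivity)) one_pos
  have ht1 : t ≤ 1 := min_le_right _ _
  refine ⟨t ^ (k*(k+1)), pow_pos ht0 _, ?_⟩
  intro ε hε hεlt
  have hε1 : ε < 1 := lt_of_lt_of_le hεlt (pow_le_one₀ ht0.le ht1)
  set δ := ε ^ ((1:ℝ)/(k:ℝ)) with hδ
  set η := ε ^ ((1:ℝ)/((k:ℝ)+1)) with hη
  have hδpos : 0 < δ := Real.rpow_pos_of_pos hε _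
  have hδ1 : δ < 1 := Real.rpow_lt_one hε.le hε1 (by positivity)
  have hηpos : 0 < η := Real.rpow_pos_of_pos hε _
  set m := (1:ℝ)/((k:ℝ)*((k:ℝ)+1)) with hm
  have hmpos : 0 < m := by positivity
  have hem : 0 < ε ^ m := Real.rpow_pos_of_pos hε _
  -- ε^m < t
  have h1 : ε ^ m < t := by
    have h := Real.rpow_lt_rpow hε.le hεlt hmpos
    rwa [← Real.rpow_natCast t (k*(k+1)), ← Real.rpow_mul ht0.le,
      (show ((k*(k+1) : ℕ):ℝ) * m = 1 by push_cast [hm]; field_simp),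
      Real.rpow_one] at h
  -- δ = η * ε^m
  have h3 : δ = η * ε ^ m := by
    rw [hδ, hη, hm, ← Real.rpow_add hε]
    congr 1
    field_simp
  -- ε ≤ η * ε^m
  have h2 : ε ≤ η * ε ^ m := by
    have he : ε = η * ε ^ ((k:ℝ)/((k:ℝ)+1)) := by
      rw [hη, ← Real.rpow_add hε, (show (1:ℝ)/((k:ℝ)+1) + (k:ℝ)/((k:ℝ)+1) = 1 by
        field_simp; ring), Real.rpow_one]
    have hle : ε ^ ((k:ℝ)/((k:ℝ)+1)) ≤ ε ^ m :=
      Real.rpow_le_rpow_of_exponent_ge hε hε1.le (by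
        rw [hm, div_le_div_iff₀ (by positivity) (by positivity)]
        nlinarith [mul_nonneg (sub_nonneg.mpr hk1) (sq_nonneg ((k:ℝ)+1))])
    calc ε = η * ε ^ ((k:ℝ)/((k:ℝ)+1)) := he
      _ ≤ η * ε ^ m := by nlinarith
  -- key bound : α * (ε + k*δ) < (1-α) * η
  have h4 : α * (ε + (k:ℝ) * δ) < (1 - α) * η := by
    have htle : t ≤ (1 - α) / (((k:ℝ)+1) * α) := min_le_left _ _
    have htle' : t * (((k:ℝ)+1) * α) ≤ 1 - α := (le_div_iff₀ (by positivity)).mp htle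
    calc α * (ε + (k:ℝ) * δ) ≤ α * (((k:ℝ)+1) * (η * ε ^ m)) := by rw [h3]; nlinarith
      _ < α * (((k:ℝ)+1) * (η * t)) :=
          mul_lt_mul_of_pos_left (mul_lt_mul_of_pos_left
            (mul_lt_mul_of_pos_left h1 hηpos) (by positivity)) hα0
      _ = η * (t * (((k:ℝ)+1) * α)) := by ring
      _ ≤ η * (1 - α) := by nlinarith
      _ = (1 - α) * η := by ring
  -- Bernoulli
  have hber : 1 - (k:ℝ) * δ ≤ (1 - δ)^k := by
    have h := one_add_mul_le_pow (show (-2:ℝ) ≤ -δ by linarith) k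
    calc 1 - (k:ℝ) * δ = 1 + (k:ℝ) * (-δ) := by ring
      _ ≤ (1 + -δ)^k := h
      _ = (1 - δ)^k := by rw [show (1:ℝ) + -δ = 1 - δ by ring]
  have hp0 : (0:ℝ) ≤ (1 - δ)^k := pow_nonneg (by linarith) k
  have hp1 : (1 - δ)^k ≤ 1 := pow_le_one₀ (by linarith) (by linarith)
  have hD : 1 - α ≤ 1 - α * (1 - δ)^k := by
    have := mul_le_mul_of_nonneg_left hp1 hα0.le
    linarith
  have hDpos : 0 < 1 - α * (1 - δ)^k := lt_of_lt_of_le hcpos hD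
  have hb2 : α - α * ((k:ℝ) * δ) ≤ α * (1 - δ)^k := by
    nlinarith [mul_le_mul_of_nonneg_left hber hα0.le]
  have hd2 : η * (1 - α) ≤ η * (1 - α * (1 - δ)^k) :=
    mul_le_mul_of_nonneg_left hD hηpos.le
  rw [gt_iff_lt, lt_div_iff₀ hDpos]
  nlinarith [hb2, hd2, h4]
end

section
/- Let K be a compact subset of a metric space (X,ρ) and let (π_t)_{t≥0} be an asymptotically stable Markov–Feller stochastically continuous semigroup on X such that for every bounded continuous φ : X → ℝ the family (P_tφ)_{t≥0} is equicontinuous at every point of X. Then, with μ_* the unique invariant probability measure, for every bounded continuous φ : X → ℝ one has lim_{t→∞} sup_{x∈K} |P_tφ(x) − ∫_X φ dμ_*| = 0. -/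
open MeasureTheory Filter Topology
open scoped ENNReal

/-- A Markov–Feller stochastically continuous semigroup of probability kernels on a metric
space `X`. -/
structure MarkovFellerSemigroup {X : Type*} [MetricSpace X] [MeasurableSpace X] [BorelSpace X]
    (π : ℝ → X → Measure X) : Prop where
  prob : ∀ t, 0 ≤ t → ∀ x, IsProbabilityMeasure (π t x)
  meas : ∀ t, 0 ≤ t → ∀ A : Set X, MeasurableSet A → Measurable fun x => π t x A
  init : ∀ x, π 0 x = Measure.dirac x
  semigroup : ∀ t, 0 ≤ t → ∀ s, 0 ≤ s → ∀ x, ∀ A : Set X, MeasurableSet A →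
    π (t + s) x A = ∫⁻ y, π s y A ∂(π t x)
  feller : ∀ t, 0 ≤ t → ∀ φ : BoundedContinuousFunction X ℝ,
    Continuous fun x => ∫ y, φ y ∂(π t x)
  stochCont : ∀ φ : BoundedContinuousFunction X ℝ, ∀ x : X,
    Tendsto (fun t => ∫ y, φ y ∂(π t x)) (nhdsWithin 0 (Set.Ioi 0)) (nhds (φ x))

/-- **Theorem 4.5 (first part).** Let `K` be a compact subset of a metric space `X` and let
`(π_t)` be an asymptotically stable Markov–Feller stochastically continuous semigroup (with
unique invariant measure `μ_*`), such that for every bounded continuous `φ` the family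
`(P_t φ)_{t ≥ 0}` is equicontinuous at every point.  Then `P_t φ → ∫ φ dμ_*` uniformly
on `K`. -/
theorem uniform_convergence_on_compacts
    {X : Type*} [MetricSpace X] [MeasurableSpace X] [BorelSpace X]
    (π : ℝ → X → Measure X) (hMFS : MarkovFellerSemigroup π)
    (K : Set X) (hK : IsCompact K)
    (heq : ∀ φ : BoundedContinuousFunction X ℝ, ∀ x₀ : X, ∀ ε : ℝ, 0 < ε → ∃ δ > 0,
      ∀ y : X, dist y x₀ < δ → ∀ t, 0 ≤ t →
        |(∫ v, φ v ∂(π t y)) - (∫ v, φ v ∂(π t x₀))| < ε)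
    (μs : Measure X) (hμs : IsProbabilityMeasure μs)
    (hinv : ∀ t, 0 ≤ t → μs.bind (π t) = μs)
    (huniq : ∀ ν : Measure X, IsProbabilityMeasure ν →
      (∀ t, 0 ≤ t → ν.bind (π t) = ν) → ν = μs)
    (hconv : ∀ μ : Measure X, IsProbabilityMeasure μ → ∀ φ : BoundedContinuousFunction X ℝ,
      Tendsto (fun t => ∫ x, φ x ∂(μ.bind (π t))) atTop (nhds (∫ x, φ x ∂μs))) :
    ∀ φ : BoundedContinuousFunction X ℝ, ∀ ε : ℝ, 0 < ε →
      ∀ᶠ t in (atTop : Filter ℝ), ∀ x ∈ K,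
        |(∫ y, φ y ∂(π t x)) - ∫ y, φ y ∂μs| < ε := by
  intro φ ε hε
  choose δ hδpos hδ using fun x => heq φ x (ε/2) (half_pos hε)
  obtain ⟨s, hsK, hcover⟩ := hK.elim_nhds_subcover (fun x => Metric.ball x (δ x))
    (fun x _ => Metric.ball_mem_nhds x (hδpos x))
  have hpt : ∀ x : X, Tendsto (fun t => ∫ y, φ y ∂(π t x)) atTop (nhds (∫ y, φ y ∂μs)) := by
    intro x
    refine (hconv (Measure.dirac x) inferInstance φ).congr' ?_
    filter_upwards [eventually_ge_atTop (0:ℝ)] with t ht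
    have hm : Measurable (π t) :=
      Measure.measurable_of_measurable_coe _ (fun A hA => hMFS.meas t ht A hA)
    rw [Measure.dirac_bind hm]
  have hev : ∀ᶠ t in (atTop : Filter ℝ), ∀ x ∈ s,
      |(∫ y, φ y ∂(π t x)) - ∫ y, φ y ∂μs| < ε/2 := by
    rw [Filter.eventually_all_finset]
    intro x _
    exact (hpt x).eventually (eventually_abs_sub_lt _ (half_pos hε))
  filter_upwards [hev, eventually_ge_atTop (0:ℝ)] with t hts ht0
  intro x hxK
  obtain ⟨i, his, hxi⟩ := Set.mem_iUnion₂.mp (hcover hxK)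
  calc |(∫ y, φ y ∂(π t x)) - ∫ y, φ y ∂μs|
      ≤ |(∫ y, φ y ∂(π t x)) - ∫ y, φ y ∂(π t i)|
        + |(∫ y, φ y ∂(π t i)) - ∫ y, φ y ∂μs| := abs_sub_le _ _ _
    _ < ε/2 + ε/2 := add_lt_add (hδ i x (by simpa [Metric.mem_ball] using hxi) t ht0) (hts i his)
    _ = ε := add_halves ε
end

section
/- Let (X,ρ) be a complete metric space, K ⊂ X compact, and (π_t)_{t≥0} an asymptotically stable Markov–Feller stochastically continuous semigroup on X with the e-property, such that the measure P_t^*δ_x is tight for every t ≥ 0 and every x ∈ K. Then, with μ_* the unique invariant probability measure, for every bounded continuous φ : X → ℝ one has lim_{t→∞} sup_{x∈K} |P_tφ(x) − ∫_X φ dμ_*| = 0. -/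
open MeasureTheory Filter Topology
open scoped ENNReal

/-- The e-property: for every bounded Lipschitz `φ` the family `(P_t φ)_{t ≥ 0}` is
equicontinuous at every point of `X`. -/
def HasEProperty {X : Type*} [MetricSpace X] [MeasurableSpace X] [BorelSpace X]
    (π : ℝ → X → Measure X) : Prop :=
  ∀ φ : X → ℝ, (∃ K : NNReal, LipschitzWith K φ) → (∃ C : ℝ, ∀ x, |φ x| ≤ C) →
    ∀ x₀ : X, ∀ ε : ℝ, 0 < ε → ∃ δ > 0, ∀ y : X, dist y x₀ < δ → ∀ t, 0 ≤ t →
      |(∫ v, φ v ∂(π t y)) - (∫ v, φ v ∂(π t x₀))| < ε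

/-- Uniform convergence on compacts for bounded *Lipschitz* observables. -/
lemma uc_lip {X : Type*} [MetricSpace X] [MeasurableSpace X] [BorelSpace X]
    (π : ℝ → X → Measure X) (hMFS : MarkovFellerSemigroup π)
    (K : Set X) (hK : IsCompact K) (he : HasEProperty π)
    (μs : Measure X)
    (hconv : ∀ μ : Measure X, IsProbabilityMeasure μ → ∀ φ : BoundedContinuousFunction X ℝ,
      Tendsto (fun t => ∫ x, φ x ∂(μ.bind (π t))) atTop (nhds (∫ x, φ x ∂μs)))
    (g : BoundedContinuousFunction X ℝ) (L : NNReal) (hL : LipschitzWith L g)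
    (ε : ℝ) (hε : 0 < ε) :
    ∀ᶠ t in (atTop : Filter ℝ), ∀ x ∈ K,
      |(∫ y, g y ∂(π t x)) - ∫ y, g y ∂μs| < ε := by
  have hmeasπ : ∀ t : ℝ, 0 ≤ t → Measurable (π t) := fun t ht =>
    Measure.measurable_of_measurable_coe _ (fun A hA => hMFS.meas t ht A hA)
  have hbd : ∀ x, |g x| ≤ ‖g‖ := fun x => by
    simpa [Real.norm_eq_abs] using g.norm_coe_le_norm x
  choose δ hδpos hδ using fun x₀ =>
    he g ⟨L, hL⟩ ⟨‖g‖, hbd⟩ x₀ (ε / 2) (by linarith)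
  obtain ⟨s, hsK, hscov⟩ := hK.elim_nhds_subcover (fun x => Metric.ball x (δ x))
    (fun x _ => Metric.ball_mem_nhds x (hδpos x))
  have hpt : ∀ x ∈ s, Tendsto (fun t => ∫ y, g y ∂(π t x)) atTop
      (nhds (∫ y, g y ∂μs)) := by
    intro x _
    have h1 := hconv (Measure.dirac x) inferInstance g
    refine h1.congr' ?_
    filter_upwards [eventually_ge_atTop (0 : ℝ)] with t ht
    rw [Measure.dirac_bind (hmeasπ t ht)]
  have heve : ∀ᶠ t in (atTop : Filter ℝ), ∀ x ∈ s,
      |(∫ y, g y ∂(π t x)) - ∫ y, g y ∂μs| < ε / 2 := by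
    rw [eventually_all_finset]
    intro x hx
    have := (hpt x hx) (Metric.ball_mem_nhds _ (by linarith : (0:ℝ) < ε / 2))
    filter_upwards [this] with t ht
    simpa [Real.dist_eq] using ht
  filter_upwards [heve, eventually_ge_atTop (0 : ℝ)] with t h1 ht x hx
  obtain ⟨xi, hxi, hxball⟩ : ∃ xi ∈ s, x ∈ Metric.ball xi (δ xi) := by
    simpa using hscov hx
  have h2 := hδ xi x (by simpa [Metric.mem_ball] using hxball) t ht
  have h3 := h1 xi hxi
  calc |(∫ y, g y ∂(π t x)) - ∫ y, g y ∂μs|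
      ≤ |(∫ y, g y ∂(π t x)) - ∫ y, g y ∂(π t xi)|
        + |(∫ y, g y ∂(π t xi)) - ∫ y, g y ∂μs| := abs_sub_le _ _ _
    _ < ε / 2 + ε / 2 := add_lt_add h2 h3
    _ = ε := by ring

/-- One-sided uniform bound for bounded continuous observables. -/
lemma uc_lower {X : Type*} [MetricSpace X] [MeasurableSpace X] [BorelSpace X]
    (π : ℝ → X → Measure X) (hMFS : MarkovFellerSemigroup π)
    (K : Set X) (hK : IsCompact K) (he : HasEProperty π)
    (μs : Measure X) (hμs : IsProbabilityMeasure μs)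
    (hconv : ∀ μ : Measure X, IsProbabilityMeasure μ → ∀ φ : BoundedContinuousFunction X ℝ,
      Tendsto (fun t => ∫ x, φ x ∂(μ.bind (π t))) atTop (nhds (∫ x, φ x ∂μs)))
    (φ : BoundedContinuousFunction X ℝ) (ε : ℝ) (hε : 0 < ε) :
    ∀ᶠ t in (atTop : Filter ℝ), ∀ x ∈ K,
      (∫ y, φ y ∂μs) - ε < ∫ y, φ y ∂(π t x) := by
  classical
  have hne : Nonempty X := by
    by_contra h
    rw [not_nonempty_iff] at h
    have h1 : μs Set.univ = 1 := hμs.measure_univ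
    have h2 : (Set.univ : Set X) = ∅ := Set.univ_eq_empty_iff.mpr h
    rw [h2, measure_empty] at h1
    exact zero_ne_one h1
  set g : ℕ → X → ℝ := fun n x => ⨅ y, (φ y + n * dist x y) with hg
  have hφlb : ∀ y : X, -‖φ‖ ≤ φ y := fun y => (abs_le.mp (by
    simpa [Real.norm_eq_abs] using φ.norm_coe_le_norm y)).1
  have hφub : ∀ y : X, φ y ≤ ‖φ‖ := fun y => (abs_le.mp (by
    simpa [Real.norm_eq_abs] using φ.norm_coe_le_norm y)).2
  have hbdd : ∀ (n : ℕ) (x : X), BddBelow (Set.range fun y => φ y + n * dist x y) := by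
    intro n x
    refine ⟨-‖φ‖, ?_⟩
    rintro _ ⟨y, rfl⟩
    show -‖φ‖ ≤ φ y + n * dist x y
    have h1 := hφlb y
    have h2 : (0:ℝ) ≤ n * dist x y := by positivity
    linarith
  have hgle : ∀ (n : ℕ) (x : X), g n x ≤ φ x := by
    intro n x
    simpa using ciInf_le (hbdd n x) x
  have hglb : ∀ (n : ℕ) (x : X), -‖φ‖ ≤ g n x := by
    intro n x
    refine le_ciInf fun y => ?_
    have h1 := hφlb y
    have h2 : (0:ℝ) ≤ n * dist x y := by positivity
    linarith
  have hkey : ∀ (n : ℕ) (x x' : X), g n x ≤ g n x' + n * dist x x' := by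
    intro n x x'
    have h : ∀ y, g n x - n * dist x x' ≤ φ y + n * dist x' y := by
      intro y
      have h1 : g n x ≤ φ y + n * dist x y := ciInf_le (hbdd n x) y
      have h2 : dist x y ≤ dist x x' + dist x' y := dist_triangle x x' y
      have h3 : (n:ℝ) * dist x y ≤ n * (dist x x' + dist x' y) :=
        mul_le_mul_of_nonneg_left h2 (Nat.cast_nonneg n)
      nlinarith
    have := le_ciInf h
    linarith
  have hlip : ∀ n : ℕ, LipschitzWith n (g n) := by
    intro n
    refine LipschitzWith.of_dist_le_mul fun x x' => ?_
    rw [Real.dist_eq]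
    have h1 := hkey n x x'
    have h2 := hkey n x' x
    rw [dist_comm x' x] at h2
    rw [abs_sub_le_iff]
    constructor <;> [skip; skip] <;> push_cast <;> linarith
  have htend : ∀ x, Tendsto (fun n => g n x) atTop (nhds (φ x)) := by
    intro x
    rw [Metric.tendsto_atTop]
    intro ε' hε'
    obtain ⟨δ', hδ'pos, hδ'⟩ := Metric.continuousAt_iff.mp (φ.continuous.continuousAt (x := x))
      (ε' / 2) (by linarith)
    refine ⟨⌈2 * ‖φ‖ / δ'⌉₊, fun n hn => ?_⟩
    have hnval : 2 * ‖φ‖ / δ' ≤ (n : ℝ) := (Nat.ceil_le.mp hn)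
    have hlow : φ x - ε' / 2 ≤ g n x := by
      refine le_ciInf fun y => ?_
      by_cases hcase : dist x y < δ'
      · have := hδ' (by simpa [dist_comm] using hcase)
        rw [Real.dist_eq, abs_sub_lt_iff] at this
        have h2 : (0:ℝ) ≤ n * dist x y := by positivity
        linarith [this.2]
      · push_neg at hcase
        have h1 : 2 * ‖φ‖ ≤ (n:ℝ) * δ' := by
          rw [div_le_iff₀ hδ'pos] at hnval
          linarith
        have h2 : (n:ℝ) * δ' ≤ n * dist x y :=
          mul_le_mul_of_nonneg_left hcase (Nat.cast_nonneg n)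
        have h3 := hφlb y
        have h4 := hφub x
        linarith
    have hup := hgle n x
    rw [Real.dist_eq, abs_sub_lt_iff]
    constructor <;> linarith
  have hmeasg : ∀ n : ℕ, AEStronglyMeasurable (g n) μs := fun n =>
    (hlip n).continuous.aestronglyMeasurable
  have hboundg : ∀ n : ℕ, ∀ᵐ y ∂μs, ‖g n y‖ ≤ ‖φ‖ := by
    intro n
    refine Filter.Eventually.of_forall fun y => ?_
    rw [Real.norm_eq_abs, abs_le]
    exact ⟨hglb n y, le_trans (hgle n y) (hφub y)⟩
  have hint : Tendsto (fun n => ∫ y, g n y ∂μs) atTop (nhds (∫ y, φ y ∂μs)) := by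
    refine tendsto_integral_of_dominated_convergence (fun _ => ‖φ‖) hmeasg
      (integrable_const _) hboundg ?_
    exact Filter.Eventually.of_forall fun y => htend y
  obtain ⟨N, hN⟩ := (hint.eventually (eventually_gt_nhds
    (by linarith : (∫ y, φ y ∂μs) - ε / 2 < ∫ y, φ y ∂μs))).exists
  set gbcf : BoundedContinuousFunction X ℝ :=
    BoundedContinuousFunction.ofNormedAddCommGroup (g N) (hlip N).continuous ‖φ‖
      (fun y => by
        rw [Real.norm_eq_abs, abs_le]
        exact ⟨hglb N y, le_trans (hgle N y) (hφub y)⟩) with hgbcf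
  have hA := uc_lip π hMFS K hK he μs hconv gbcf N (hlip N) (ε / 2) (by linarith)
  filter_upwards [hA, eventually_ge_atTop (0 : ℝ)] with t h1 ht x hx
  haveI := hMFS.prob t ht x
  have hmono : ∫ y, gbcf y ∂(π t x) ≤ ∫ y, φ y ∂(π t x) :=
    integral_mono (gbcf.integrable _) (φ.integrable _) (fun y => hgle N y)
  have h2 := h1 x hx
  rw [abs_sub_lt_iff] at h2
  have hgbcfμs : (∫ y, gbcf y ∂μs) = ∫ y, g N y ∂μs := rfl
  have h3 := h2.2
  rw [hgbcfμs] at h3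
  linarith

/-- **Theorem 4.5 (second part).** Let `X` be a complete metric space, `K ⊆ X` compact and
`(π_t)` an asymptotically stable Markov–Feller stochastically continuous semigroup (with
unique invariant measure `μ_*`) having the e-property, such that `P_t^* δ_x = π_t(x,·)` is
tight for every `t ≥ 0` and `x ∈ K`.  Then `P_t φ → ∫ φ dμ_*` uniformly on `K` for every
bounded continuous `φ`. -/
theorem uniform_convergence_on_compacts_eProperty
    {X : Type*} [MetricSpace X] [CompleteSpace X] [MeasurableSpace X] [BorelSpace X]
    (π : ℝ → X → Measure X) (hMFS : MarkovFellerSemigroup π)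
    (K : Set X) (hK : IsCompact K)
    (he : HasEProperty π)
    (μs : Measure X) (hμs : IsProbabilityMeasure μs)
    (hinv : ∀ t, 0 ≤ t → μs.bind (π t) = μs)
    (huniq : ∀ ν : Measure X, IsProbabilityMeasure ν →
      (∀ t, 0 ≤ t → ν.bind (π t) = ν) → ν = μs)
    (hconv : ∀ μ : Measure X, IsProbabilityMeasure μ → ∀ φ : BoundedContinuousFunction X ℝ,
      Tendsto (fun t => ∫ x, φ x ∂(μ.bind (π t))) atTop (nhds (∫ x, φ x ∂μs)))
    (htight : ∀ t, 0 ≤ t → ∀ x ∈ K, ∀ ε : ℝ, 0 < ε →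
      ∃ C : Set X, IsCompact C ∧ (π t x) Cᶜ < ENNReal.ofReal ε) :
    ∀ φ : BoundedContinuousFunction X ℝ, ∀ ε : ℝ, 0 < ε →
      ∀ᶠ t in (atTop : Filter ℝ), ∀ x ∈ K,
        |(∫ y, φ y ∂(π t x)) - ∫ y, φ y ∂μs| < ε := by
  intro φ ε hε
  have hlo := uc_lower π hMFS K hK he μs hμs hconv φ ε hε
  have hhi := uc_lower π hMFS K hK he μs hμs hconv (-φ) ε hε
  filter_upwards [hlo, hhi] with t h1 h2 x hx
  have a := h1 x hx
  have b := h2 x hx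
  simp only [BoundedContinuousFunction.coe_neg, Pi.neg_apply, integral_neg] at b
  rw [abs_sub_lt_iff]
  constructor <;> linarith
end

section
/- Let (X,ρ) be a complete metric space, K ⊂ X compact, and (π_t)_{t≥0} an asymptotically stable Markov–Feller stochastically continuous semigroup on X with the e-property, such that P_t^*δ_x is tight for every t ≥ 0 and x ∈ K. Then the family {P_t^*δ_x : t ≥ 0, x ∈ K} is uniformly tight: for every ε > 0 there exists a compact set K_ε ⊂ X such that P_t^*δ_x(X ∖ K_ε) < ε for all t ≥ 0 and all x ∈ K. -/
open MeasureTheory Filter Topology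
open scoped ENNReal

/-- Asymptotic stability: there is a unique invariant probability measure `μ_*` and
`P_t^* μ → μ_*` weakly as `t → ∞` for every probability measure `μ`. -/
def AsymptoticallyStable {X : Type*} [MetricSpace X] [MeasurableSpace X] [BorelSpace X]
    (π : ℝ → X → Measure X) : Prop :=
  ∃ μs : Measure X, IsProbabilityMeasure μs ∧
    (∀ t, 0 ≤ t → μs.bind (π t) = μs) ∧
    (∀ ν : Measure X, IsProbabilityMeasure ν → (∀ t, 0 ≤ t → ν.bind (π t) = ν) → ν = μs) ∧
    (∀ μ : Measure X, IsProbabilityMeasure μ → ∀ φ : BoundedContinuousFunction X ℝ,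
      Tendsto (fun t => ∫ x, φ x ∂(μ.bind (π t))) atTop (nhds (∫ x, φ x ∂μs)))


/-!
Compactify time by setting `P_∞^* δ_x := μ_*`. For bounded Lipschitz `φ`, the e-property makes the
functions `x ↦ P_t φ(x)`, `t ∈ [0, ∞]`, equicontinuous; together with stochastic continuity and the
semigroup law it also makes `t ↦ P_t φ(x)` uniformly continuous on `[0, ∞)`, and asymptotic
stability supplies the limit `∫ φ dμ_*` at `∞`. Since bounded Lipschitz test functions determine
weak convergence, `(t, x) ↦ P_t^* δ_x` is weakly continuous on `[0, ∞] × X`, so the family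
`{P_t^* δ_x : t ∈ [0, ∞], x ∈ K}` is weakly compact. Each member is tight (`μ_*` because, as a weak
limit of tight measures, it is carried by a separable closed set). By the portmanteau theorem and a
finite subcover, for all `r, ε > 0` finitely many `r`-balls then carry mass `≥ 1 - ε` under every
member of a weakly compact family of such measures, and in a complete space this is uniform
tightness.
-/

open Metric Set
open scoped NNReal

theorem continuousAt_uncurry_of_equicontinuousAt {ι Y α : Type*} [TopologicalSpace ι]
    [TopologicalSpace Y] [PseudoMetricSpace α] {F : ι → Y → α} {i₀ : ι} {y₀ : Y}
    (hF : EquicontinuousAt F y₀) (hi : ContinuousAt (F · y₀) i₀) :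
    ContinuousAt (Function.uncurry F) (i₀, y₀) := by
  refine Metric.continuousAt_iff'.2 fun ε hε => ?_
  filter_upwards [prod_mem_nhds (Metric.continuousAt_iff'.1 hi (ε / 2) (half_pos hε))
    (Metric.equicontinuousAt_iff_right.1 hF (ε / 2) (half_pos hε))] with ⟨i, y⟩ ⟨hi, hy⟩
  calc dist (F i y) (F i₀ y₀) ≤ dist (F i y) (F i y₀) + dist (F i y₀) (F i₀ y₀) :=
        dist_triangle _ _ _
    _ < ε / 2 + ε / 2 := add_lt_add (by rw [dist_comm]; exact hy i) hi
    _ = ε := add_halves ε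

theorem continuous_ite_top_of_tendsto {α : Type*} [TopologicalSpace α] {h : ℝ≥0 → α} {a : α}
    (hc : Continuous h) (ha : Tendsto h atTop (𝓝 a)) :
    Continuous fun t : ℝ≥0∞ => if t = ⊤ then a else h t.toNNReal := by
  refine continuous_iff_continuousAt.2 fun t => ?_
  induction t using ENNReal.recTopCoe with
  | top =>
    rw [ContinuousAt, if_pos rfl]
    refine nhds_top_basis.tendsto_left_iff.2 fun U hU => ?_
    obtain ⟨N, hN⟩ := tendsto_atTop'.1 ha U hU
    refine ⟨N, ENNReal.coe_lt_top, fun t ht => ?_⟩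
    induction t using ENNReal.recTopCoe with
    | top => simpa using mem_of_mem_nhds hU
    | coe t => simpa using hN t (ENNReal.coe_lt_coe.1 ht).le
  | coe t =>
    refine (hc.continuousAt.comp (ENNReal.tendsto_toNNReal ENNReal.coe_ne_top)).congr ?_
    filter_upwards [ENNReal.isOpen_ne_top.mem_nhds ENNReal.coe_ne_top] with s hs
    simp [hs]

theorem isCompact_iInter_cthickening {X : Type*} [PseudoMetricSpace X] [CompleteSpace X]
    {F : ℕ → Set X} (hF : ∀ n, (F n).Finite) {r : ℕ → ℝ} (hr : Tendsto r atTop (𝓝 0)) :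
    IsCompact (⋂ n, cthickening (r n) (F n)) := by
  refine TotallyBounded.isCompact_of_isClosed (totallyBounded_iff.2 fun δ hδ => ?_)
    (isClosed_iInter fun n => isClosed_cthickening)
  obtain ⟨n, hn⟩ := (hr.eventually (gt_mem_nhds (half_pos hδ))).exists
  refine ⟨F n, hF n, (iInter_subset _ n).trans
    ((cthickening_subset_iUnion_closedBall_of_lt _ (half_pos hδ) hn).trans ?_)⟩
  exact iUnion₂_mono fun z _ => closedBall_subset_ball (half_lt_self hδ)

namespace MeasureTheory

variable {X : Type*} [PseudoMetricSpace X] [MeasurableSpace X]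

theorem ProbabilityMeasure.eventually_measure_lt_of_tendsto [OpensMeasurableSpace X] {ι : Type*}
    {l : Filter ι} {ν : ι → ProbabilityMeasure X} {μ : ProbabilityMeasure X}
    (h : Tendsto ν l (𝓝 μ)) {F : Set X} (hF : IsClosed F) {ε : ℝ≥0∞}
    (hμF : (μ : Measure X) F < ε) : ∀ᶠ i in l, (ν i : Measure X) F < ε :=
  eventually_lt_of_limsup_lt
    ((ProbabilityMeasure.limsup_measure_closed_le_of_tendsto h hF).trans_lt hμF)

theorem abs_integral_sub_le_of_forall_mem_ball [OpensMeasurableSpace X] {ν : Measure X}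
    [IsProbabilityMeasure ν] {g : X → ℝ} (hg : Continuous g) {M β δ : ℝ} (hM : ∀ y, |g y| ≤ M)
    {x : X} (hδ : 0 < δ) (hβ : ∀ y ∈ ball x δ, |g y - g x| ≤ β) :
    |∫ y, g y ∂ν - g x| ≤ β + 2 * M * ν.real (ball x δ)ᶜ := by
  have hint : Integrable g ν :=
    Integrable.of_bound hg.aestronglyMeasurable M (Eventually.of_forall hM)
  have hmeas : MeasurableSet (ball x δ)ᶜ := isOpen_ball.measurableSet.compl
  have hpt : ∀ y, |g y - g x| ≤ β + (ball x δ)ᶜ.indicator (fun _ => 2 * M) y := by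
    intro y
    by_cases hy : y ∈ ball x δ
    · simpa [hy] using hβ y hy
    · have hβ0 : 0 ≤ β := (abs_nonneg _).trans (hβ x (mem_ball_self hδ))
      rw [indicator_of_mem hy]
      linarith [abs_sub (g y) (g x), hM y, hM x]
  calc |∫ y, g y ∂ν - g x| = |∫ y, (g y - g x) ∂ν| := by
        rw [integral_sub hint (integrable_const _), integral_const]; simp
    _ ≤ ∫ y, |g y - g x| ∂ν := abs_integral_le_integral_abs
    _ ≤ ∫ y, (β + (ball x δ)ᶜ.indicator (fun _ => 2 * M) y) ∂ν :=
        integral_mono (hint.sub (integrable_const _)).abs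
          ((integrable_const _).add ((integrable_const _).indicator hmeas)) hpt
    _ = β + 2 * M * ν.real (ball x δ)ᶜ := by
        rw [integral_add (integrable_const _) ((integrable_const _).indicator hmeas),
          integral_const, integral_indicator_const _ hmeas]
        simp [mul_comm]

/-- `cthickening r F` is the union of the closed `r`-balls centred in `F`. -/
def IsBallTight (S : Set (Measure X)) : Prop :=
  ∀ r > 0, ∀ ε : ℝ≥0∞, 0 < ε → ∃ F : Finset X, ∀ μ ∈ S, μ (cthickening r (F : Set X))ᶜ ≤ ε

theorem IsTightMeasureSet.isBallTight {S : Set (Measure X)} (h : IsTightMeasureSet S) :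
    IsBallTight S := by
  intro r hr ε hε
  obtain ⟨C, hC, hCS⟩ := isTightMeasureSet_iff_exists_isCompact_measure_compl_le.1 h ε hε
  obtain ⟨F, hF, hCF⟩ := totallyBounded_iff.1 hC.totallyBounded r hr
  refine ⟨hF.toFinset, fun μ hμ => (measure_mono (compl_subset_compl.2 ?_)).trans (hCS μ hμ)⟩
  intro y hy
  obtain ⟨z, hz, hyz⟩ := mem_iUnion₂.1 (hCF hy)
  exact mem_cthickening_of_dist_le y z r _ (by simpa using hz) (mem_ball.1 hyz).le

theorem IsBallTight.isTightMeasureSet [CompleteSpace X] {S : Set (Measure X)}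
    (h : IsBallTight S) : IsTightMeasureSet S := by
  refine isTightMeasureSet_iff_exists_isCompact_measure_compl_le.2 fun ε hε => ?_
  obtain ⟨δ, hδ, hδε⟩ := ENNReal.exists_pos_sum_of_countable hε.ne' ℕ
  choose F hF using fun n : ℕ =>
    h (1 / ((n : ℝ) + 1)) Nat.one_div_pos_of_nat (δ n) (ENNReal.coe_pos.2 (hδ n))
  refine ⟨⋂ n : ℕ, cthickening (1 / ((n : ℝ) + 1)) (F n : Set X),
    isCompact_iInter_cthickening (fun n => (F n).finite_toSet)
      tendsto_one_div_add_atTop_nhds_zero_nat, fun μ hμ => ?_⟩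
  calc μ (⋂ n : ℕ, cthickening (1 / ((n : ℝ) + 1)) (F n : Set X))ᶜ
      = μ (⋃ n : ℕ, (cthickening (1 / ((n : ℝ) + 1)) (F n : Set X))ᶜ) := by rw [compl_iInter]
    _ ≤ ∑' n : ℕ, μ (cthickening (1 / ((n : ℝ) + 1)) (F n : Set X))ᶜ := measure_iUnion_le _
    _ ≤ ∑' n, (δ n : ℝ≥0∞) := ENNReal.tsum_le_tsum fun n => hF n μ hμ
    _ ≤ ε := hδε.le

theorem isBallTight_singleton_of_isSeparable [OpensMeasurableSpace X] {μ : Measure X}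
    [IsFiniteMeasure μ] {S : Set X} (hS : TopologicalSpace.IsSeparable S) (hμS : μ Sᶜ = 0) :
    IsBallTight {μ} := by
  classical
  intro r hr ε hε
  rcases isEmpty_or_nonempty X with hX | hX
  · exact ⟨∅, by simp [Set.eq_empty_of_isEmpty]⟩
  obtain ⟨c, hc, hSc⟩ := hS
  obtain ⟨f, hcf⟩ := Set.countable_iff_exists_subset_range.1 hc
  set B : ℕ → Set X := fun m => (cthickening r ((Finset.range m).image f : Set X))ᶜ
  have hB : Antitone B := fun m n hmn => compl_subset_compl.2 <| cthickening_subset_of_subset _ <|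
    Finset.coe_subset.2 (Finset.image_subset_image (Finset.range_subset_range.2 hmn))
  have hBS : ⋂ m, B m ⊆ Sᶜ := by
    intro y hy hyS
    obtain ⟨k, hk⟩ := mem_closure_range_iff.1 (closure_mono hcf (hSc hyS)) r hr
    exact mem_iInter.1 hy (k + 1) (mem_cthickening_of_dist_le y (f k) r _
      (Finset.mem_coe.2 (Finset.mem_image_of_mem f (Finset.self_mem_range_succ k))) hk.le)
  have hlim : Tendsto (μ ∘ B) atTop (𝓝 0) := by
    have := tendsto_measure_iInter_atTop
      (fun m => isClosed_cthickening.isOpen_compl.measurableSet.nullMeasurableSet) hB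
      ⟨0, measure_ne_top μ _⟩
    rwa [measure_mono_null hBS hμS] at this
  obtain ⟨m, hm⟩ := (hlim.eventually (gt_mem_nhds hε)).exists
  exact ⟨(Finset.range m).image f, by rintro _ rfl; exact hm.le⟩

theorem isBallTight_singleton_of_tendsto [OpensMeasurableSpace X] {ν : ℕ → ProbabilityMeasure X}
    {μ : ProbabilityMeasure X} (hν : Tendsto ν atTop (𝓝 μ))
    (htight : ∀ n, IsTightMeasureSet {(ν n : Measure X)}) : IsBallTight {(μ : Measure X)} := by
  choose C hC hνC using fun n (k : ℕ) =>
    isTightMeasureSet_iff_exists_isCompact_measure_compl_le.1 (htight n) (k : ℝ≥0∞)⁻¹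
      (ENNReal.inv_pos.2 (ENNReal.natCast_ne_top k))
  set S := closure (⋃ n, ⋃ k, C n k)
  have hνS : ∀ n, (ν n : Measure X) Sᶜ = 0 := by
    refine fun n => le_antisymm (le_of_forall_gt fun ε hε => ?_) bot_le
    obtain ⟨k, hk⟩ := ENNReal.exists_inv_nat_lt hε.ne'
    calc (ν n : Measure X) Sᶜ ≤ (ν n : Measure X) (C n k)ᶜ :=
          measure_mono (compl_subset_compl.2 ((subset_iUnion₂ (s := fun n k => C n k) n k).trans
            subset_closure))
      _ ≤ (k : ℝ≥0∞)⁻¹ := hνC n k _ rfl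
      _ < ε := hk
  refine isBallTight_singleton_of_isSeparable (TopologicalSpace.IsSeparable.closure
    (TopologicalSpace.isSeparable_iUnion.2 fun n =>
      TopologicalSpace.isSeparable_iUnion.2 fun k => (hC n k).isSeparable)) ?_
  refine le_antisymm ?_ bot_le
  calc (μ : Measure X) Sᶜ ≤ liminf (fun n => (ν n : Measure X) Sᶜ) atTop :=
        ProbabilityMeasure.le_liminf_measure_open_of_tendsto hν isClosed_closure.isOpen_compl
    _ = 0 := by simp [hνS]

theorem isBallTight_of_isCompact [OpensMeasurableSpace X] {S : Set (ProbabilityMeasure X)}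
    (hS : IsCompact S) (h : ∀ μ ∈ S, IsBallTight {(μ : Measure X)}) :
    IsBallTight (((↑) : ProbabilityMeasure X → Measure X) '' S) := by
  classical
  intro r hr ε hε
  rcases eq_or_ne ε ⊤ with rfl | hε_top
  · exact ⟨∅, fun _ _ => le_top⟩
  choose! F hF using fun μ (hμ : μ ∈ S) =>
    h μ hμ (r / 2) (half_pos hr) (ε / 2) (ENNReal.half_pos hε.ne')
  have hU : ∀ μ ∈ S,
      {ν : ProbabilityMeasure X | (ν : Measure X) (thickening r (F μ : Set X))ᶜ < ε} ∈ 𝓝 μ :=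
    fun μ hμ => ProbabilityMeasure.eventually_measure_lt_of_tendsto tendsto_id
      isOpen_thickening.isClosed_compl <|
        (measure_mono (compl_subset_compl.2 (cthickening_subset_thickening' hr (half_lt_self hr)
          _))).trans_lt ((hF μ hμ μ rfl).trans_lt (ENNReal.half_lt_self hε.ne' hε_top))
  obtain ⟨T, -, hST⟩ := hS.elim_nhds_subcover _ hU
  refine ⟨T.biUnion F, ?_⟩
  rintro _ ⟨ν, hν, rfl⟩
  obtain ⟨μ, hμT, hνμ⟩ := mem_iUnion₂.1 (hST hν)
  refine (measure_mono (compl_subset_compl.2 ?_)).trans hνμ.le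
  exact (thickening_subset_cthickening _ _).trans (cthickening_subset_of_subset _
    (Finset.coe_subset.2 (Finset.subset_biUnion_of_mem F hμT)))

end MeasureTheory

namespace MarkovFellerSemigroup

variable {X : Type*} [MetricSpace X] [MeasurableSpace X] [BorelSpace X] {π : ℝ → X → Measure X}

theorem measurable (hπ : MarkovFellerSemigroup π) {t : ℝ} (ht : 0 ≤ t) : Measurable (π t) :=
  Measure.measurable_of_measurable_coe _ fun _ hA => hπ.meas t ht _ hA

theorem integral_add_eq_integral_integral (hπ : MarkovFellerSemigroup π) {t s : ℝ} (ht : 0 ≤ t)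
    (hs : 0 ≤ s) (x : X) {f : X → ℝ} (hf : Integrable f (π (t + s) x)) :
    ∫ y, f y ∂π (t + s) x = ∫ y, ∫ z, f z ∂π s y ∂π t x := by
  let κ : ProbabilityTheory.Kernel X X := ⟨π t, hπ.measurable ht⟩
  let η : ProbabilityTheory.Kernel X X := ⟨π s, hπ.measurable hs⟩
  have hcomp : π (t + s) x = (η.comp κ) x := by
    ext A hA
    rw [ProbabilityTheory.Kernel.comp_apply, Measure.bind_apply hA η.aemeasurable,
      hπ.semigroup t ht s hs x A hA]
    rfl
  rw [hcomp] at hf ⊢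
  exact ProbabilityTheory.Kernel.integral_comp hf

def transition (hπ : MarkovFellerSemigroup π) (t : ℝ≥0) (x : X) : ProbabilityMeasure X :=
  ⟨π t x, hπ.prob t t.coe_nonneg x⟩

theorem eventually_measure_compl_ball_lt (hπ : MarkovFellerSemigroup π) (x : X) {δ : ℝ}
    (hδ : 0 < δ) {ε : ℝ≥0∞} (hε : 0 < ε) : ∀ᶠ u in 𝓝[>] (0 : ℝ), π u x (ball x δ)ᶜ < ε := by
  have hlim : Tendsto (fun u : ℝ => hπ.transition u.toNNReal x) (𝓝[>] 0)
      (𝓝 (hπ.transition 0 x)) := by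
    refine ProbabilityMeasure.tendsto_iff_forall_integral_tendsto.2 fun φ => ?_
    have h0 : ∫ y, φ y ∂(hπ.transition 0 x : Measure X) = φ x := by
      simp [transition, hπ.init]
    rw [h0]
    refine (hπ.stochCont φ x).congr' ?_
    filter_upwards [self_mem_nhdsWithin] with u hu
    simp [transition, Real.coe_toNNReal _ (le_of_lt hu)]
  have hdirac : (hπ.transition 0 x : Measure X) (ball x δ)ᶜ < ε := by
    simpa [transition, hπ.init, mem_ball_self hδ] using hε
  filter_upwards [ProbabilityMeasure.eventually_measure_lt_of_tendsto hlim
    isOpen_ball.isClosed_compl hdirac, self_mem_nhdsWithin] with u hu hu0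
  simpa [transition, Real.coe_toNNReal _ (le_of_lt hu0)] using hu

theorem uniformContinuous_integral (hπ : MarkovFellerSemigroup π) (he : HasEProperty π)
    {φ : BoundedContinuousFunction X ℝ} (hφ : ∃ K, LipschitzWith K φ) (x : X) :
    UniformContinuous fun t : ℝ≥0 => ∫ y, φ y ∂π t x := by
  have hbound : ∀ {ν : Measure X} [IsProbabilityMeasure ν], |∫ y, φ y ∂ν| ≤ ‖φ‖ := fun {ν} _ =>
    (Real.norm_eq_abs _).symm.trans_le (φ.norm_integral_le_norm ν)
  refine Metric.uniformContinuous_iff.2 fun ε hε => ?_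
  obtain ⟨δ, hδ, hequi⟩ := he φ hφ ⟨‖φ‖, fun y => (Real.norm_eq_abs _).symm.trans_le
    (φ.norm_coe_le_norm y)⟩ x (ε / 2) (half_pos hε)
  set η := ε / 4 / (‖φ‖ + 1) with hη_def
  have hη : 0 < η := by positivity
  obtain ⟨w, hw, hwu⟩ := mem_nhdsGT_iff_exists_Ioo_subset.1
    (hπ.eventually_measure_compl_ball_lt x hδ (ENNReal.ofReal_pos.2 hη))
  -- `P_{u+s}φ(x) - P_sφ(x) = ∫ (P_sφ(y) - P_sφ(x)) π_u(x, dy)`: the e-property bounds the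
  -- integrand on `ball x δ` uniformly in `s`, and `π_u(x, ·)` puts little mass outside that ball.
  have key : ∀ s : ℝ≥0, ∀ u : ℝ, 0 < u → u < w →
      |∫ y, φ y ∂π (u + s) x - ∫ y, φ y ∂π s x| < ε := by
    intro s u hu huw
    have : IsProbabilityMeasure (π u x) := hπ.prob u hu.le x
    have : IsProbabilityMeasure (π (u + s) x) := hπ.prob _ (by positivity) x
    rw [hπ.integral_add_eq_integral_integral hu.le s.coe_nonneg x
      (φ.integrable (π (u + s) x))]
    have hmass : (π u x).real (ball x δ)ᶜ ≤ η :=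
      ENNReal.toReal_le_of_le_ofReal hη.le (hwu ⟨hu, huw⟩).le
    have hsmall : 2 * ‖φ‖ * η < ε / 2 := by
      rw [hη_def, mul_div_assoc', div_lt_iff₀ (by positivity)]
      nlinarith [norm_nonneg φ]
    calc |∫ y, ∫ z, φ z ∂π s y ∂π u x - ∫ y, φ y ∂π s x|
        ≤ ε / 2 + 2 * ‖φ‖ * (π u x).real (ball x δ)ᶜ :=
          abs_integral_sub_le_of_forall_mem_ball (hπ.feller s s.coe_nonneg φ)
            (fun y => haveI := hπ.prob s s.coe_nonneg y; hbound (ν := π s y)) hδ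
            (fun y hy => (hequi y hy s s.coe_nonneg).le)
      _ ≤ ε / 2 + 2 * ‖φ‖ * η := by gcongr
      _ < ε := by linarith
  refine ⟨w, hw, fun a b hab => ?_⟩
  wlog hle : a ≤ b generalizing a b
  · rw [dist_comm]; exact this b a (by rwa [dist_comm]) (le_of_not_ge hle)
  rcases hle.eq_or_lt with rfl | hlt
  · simpa using hε
  have hlt' : (a : ℝ) < b := hlt
  have := key a (b - a) (sub_pos.2 hlt')
    (by rwa [NNReal.dist_eq, abs_sub_comm, abs_of_pos (sub_pos.2 hlt')] at hab)
  rw [sub_add_cancel] at this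
  rw [Real.dist_eq, abs_sub_comm]
  exact this

noncomputable def extendedTransition (hπ : MarkovFellerSemigroup π) (μ : ProbabilityMeasure X)
    (t : ℝ≥0∞) (x : X) : ProbabilityMeasure X :=
  if t = ⊤ then μ else hπ.transition t.toNNReal x

@[simp]
theorem extendedTransition_top (hπ : MarkovFellerSemigroup π) (μ : ProbabilityMeasure X) (x : X) :
    hπ.extendedTransition μ ⊤ x = μ :=
  if_pos rfl

@[simp]
theorem extendedTransition_coe (hπ : MarkovFellerSemigroup π) (μ : ProbabilityMeasure X) (t : ℝ≥0)
    (x : X) :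
    hπ.extendedTransition μ t x = hπ.transition t x := by
  simp [extendedTransition]

theorem continuous_extendedTransition (hπ : MarkovFellerSemigroup π) (he : HasEProperty π)
    {μ : ProbabilityMeasure X} (hμ : ∀ x, Tendsto (fun t => hπ.transition t x) atTop (𝓝 μ)) :
    Continuous (Function.uncurry (hπ.extendedTransition μ)) := by
  refine continuous_iff_continuousAt.2 fun ⟨t₀, x₀⟩ => ?_
  refine tendsto_iff_forall_lipschitz_integral_tendsto.2 fun f hfb hfl => ?_
  let φ : BoundedContinuousFunction X ℝ := ⟨⟨f, hfl.choose_spec.continuous⟩, hfb⟩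
  have hequi :
      EquicontinuousAt (fun t x => ∫ y, φ y ∂(hπ.extendedTransition μ t x : Measure X)) x₀ := by
    refine Metric.equicontinuousAt_iff_right.2 fun ε hε => ?_
    obtain ⟨δ, hδ, hδx⟩ := he φ hfl ⟨‖φ‖, fun y => (Real.norm_eq_abs _).symm.trans_le
      (φ.norm_coe_le_norm y)⟩ x₀ ε hε
    filter_upwards [ball_mem_nhds x₀ hδ] with x hx t
    induction t using ENNReal.recTopCoe with
    | top => simpa using hε
    | coe t =>
      rw [Real.dist_eq, abs_sub_comm]
      simpa [transition] using hδx x hx t t.coe_nonneg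
  have htime : Continuous fun t => ∫ y, φ y ∂(hπ.extendedTransition μ t x₀ : Measure X) := by
    convert continuous_ite_top_of_tendsto (hπ.uniformContinuous_integral he hfl x₀).continuous
      (ProbabilityMeasure.tendsto_iff_forall_integral_tendsto.1 (hμ x₀) φ) using 2 with t
    simp only [extendedTransition]
    split_ifs <;> rfl
  exact continuousAt_uncurry_of_equicontinuousAt hequi htime.continuousAt

end MarkovFellerSemigroup

theorem AsymptoticallyStable.exists_tendsto_transition {X : Type*} [MetricSpace X]
    [MeasurableSpace X] [BorelSpace X] {π : ℝ → X → Measure X} (hstab : AsymptoticallyStable π)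
    (hπ : MarkovFellerSemigroup π) :
    ∃ μ : ProbabilityMeasure X, ∀ x, Tendsto (fun t => hπ.transition t x) atTop (𝓝 μ) := by
  obtain ⟨μ, hμ, -, -, hconv⟩ := hstab
  refine ⟨⟨μ, hμ⟩, fun x => ProbabilityMeasure.tendsto_iff_forall_integral_tendsto.2 fun φ => ?_⟩
  refine ((hconv (Measure.dirac x) inferInstance φ).comp
    (NNReal.tendsto_coe_atTop.2 tendsto_id)).congr fun t => ?_
  show ∫ y, φ y ∂(Measure.dirac x).bind (π t) = ∫ y, φ y ∂π t x
  rw [Measure.dirac_bind (hπ.measurable t.coe_nonneg)]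

theorem isTightMeasureSet_singleton_of_forall_measure_compl_lt {X : Type*} [TopologicalSpace X]
    [MeasurableSpace X] {μ : Measure X}
    (h : ∀ ε : ℝ, 0 < ε → ∃ C, IsCompact C ∧ μ Cᶜ < ENNReal.ofReal ε) : IsTightMeasureSet {μ} := by
  refine isTightMeasureSet_iff_exists_isCompact_measure_compl_le.2 fun ε hε => ?_
  obtain ⟨r, -, hr0, hrε⟩ := ENNReal.lt_iff_exists_real_btwn.1 hε
  obtain ⟨C, hC, hμC⟩ := h r (ENNReal.ofReal_pos.1 hr0)
  exact ⟨C, hC, by rintro _ rfl; exact (hμC.trans hrε).le⟩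

/-- **Uniform tightness on compacts.** Let `X` be a complete metric space, `K ⊆ X`
compact, and `(π_t)` an asymptotically stable Markov–Feller stochastically continuous
semigroup with the e-property such that `P_t^* δ_x = π_t(x,·)` is tight for every `t ≥ 0`
and `x ∈ K`.  Then the family `{π_t(x,·) : t ≥ 0, x ∈ K}` is uniformly tight. -/
theorem uniform_tightness_on_compacts
    {X : Type*} [MetricSpace X] [CompleteSpace X] [MeasurableSpace X] [BorelSpace X]
    (π : ℝ → X → Measure X) (hMFS : MarkovFellerSemigroup π)
    (K : Set X) (hK : IsCompact K)
    (he : HasEProperty π)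
    (hstab : AsymptoticallyStable π)
    (htight : ∀ t, 0 ≤ t → ∀ x ∈ K, ∀ ε : ℝ, 0 < ε →
      ∃ C : Set X, IsCompact C ∧ (π t x) Cᶜ < ENNReal.ofReal ε) :
    ∀ ε : ℝ, 0 < ε → ∃ Kε : Set X, IsCompact Kε ∧
      ∀ t, 0 ≤ t → ∀ x ∈ K, (π t x) Kεᶜ < ENNReal.ofReal ε := by
  obtain ⟨μ, hμ⟩ := hstab.exists_tendsto_transition hMFS
  have htransition (t : ℝ≥0) (x : X) (hx : x ∈ K) :
      IsTightMeasureSet {(hMFS.transition t x : Measure X)} :=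
    isTightMeasureSet_singleton_of_forall_measure_compl_lt (htight t t.coe_nonneg x hx)
  have hball : ∀ ν ∈ Function.uncurry (hMFS.extendedTransition μ) '' (univ ×ˢ K),
      IsBallTight {(ν : Measure X)} := by
    rintro _ ⟨⟨t, x⟩, ⟨-, hx⟩, rfl⟩
    induction t using ENNReal.recTopCoe with
    | top =>
      simpa using isBallTight_singleton_of_tendsto ((hμ x).comp tendsto_natCast_atTop_atTop)
        fun n => htransition n x hx
    | coe t => simpa using (htransition t x hx).isBallTight
  have hunif := (isBallTight_of_isCompact ((isCompact_univ.prod hK).image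
    (hMFS.continuous_extendedTransition he hμ)) hball).isTightMeasureSet
  intro ε hε
  have hε' : ENNReal.ofReal ε ≠ 0 := (ENNReal.ofReal_pos.2 hε).ne'
  obtain ⟨C, hC, hCS⟩ := isTightMeasureSet_iff_exists_isCompact_measure_compl_le.1 hunif
    (ENNReal.ofReal ε / 2) (ENNReal.half_pos hε')
  refine ⟨C, hC, fun t ht x hx => ?_⟩
  have hmem : π t x ∈ ((↑) : ProbabilityMeasure X → Measure X) ''
      (Function.uncurry (hMFS.extendedTransition μ) '' (univ ×ˢ K)) :=
    ⟨_, ⟨((t.toNNReal : ℝ≥0∞), x), ⟨mem_univ _, hx⟩, rfl⟩, by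
      simp [MarkovFellerSemigroup.transition, Real.coe_toNNReal t ht]⟩
  exact (hCS _ hmem).trans_lt (ENNReal.half_lt_self hε' ENNReal.ofReal_ne_top)
end

section
/- Let (X,ρ) be a complete metric space, N ≥ 1, w_1,…,w_N : X → X continuous and p_1,…,p_N : X → [0,1] continuous with Σ_{i=1}^N p_i(x) = 1 for all x. Suppose r, ω : [0,∞) → [0,∞) are nondecreasing, concave, continuous at 0 with r(0) = ω(0) = 0, and there is T > 0 such that for every 0 < t < T the series Σ_{n=1}^∞ ω(r^n(t)) converges and r(t) < t (r^n the n-th iterate of r). Assume Σ_{i=1}^N p_i(x) ρ(w_i(x), w_i(y)) ≤ r(ρ(x,y)) and Σ_{i=1}^N |p_i(x) − p_i(y)| ≤ ω(ρ(x,y)) for all x, y ∈ X. Define Pφ(x) = Σ_{i=1}^N p_i(x) φ(w_i(x)). Then for every bounded Lipschitz φ : X → ℝ the family of iterates {P^nφ : n ∈ ℕ} is equicontinuous at every point of X. -/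
/-!
If `ψ` has a concave nondecreasing modulus of continuity `g` and `|ψ| ≤ C`, splitting
`Pψ(x) - Pψ(y) = Σ pᵢ(x) (ψ(wᵢx) - ψ(wᵢy)) + Σ (pᵢ(x) - pᵢ(y)) ψ(wᵢy)` and applying Jensen's
inequality to the first sum shows that `Pψ` has the modulus `g ∘ r + C ω`, again concave and
nondecreasing. Starting from the Lipschitz modulus `K t`, the iterate `Pⁿφ` therefore has the
modulus `K rⁿ(t) + C Σ_{k<n} ω(rᵏ(t))`, which is at most `K t + C Σ_k ω(rᵏ(t))` for small `t`
since `r(t) ≤ t` there. This bound does not depend on `n`, and it tends to `0` with `t` by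
dominated convergence, the summable series `Σ_k ω(rᵏ(t₀))` being a dominating bound.
-/

open MeasureTheory Filter Topology

/-- The transition operator `Pφ(x) = Σᵢ pᵢ(x) φ(wᵢ(x))` of an iterated function system,
acting on real-valued functions. -/
def ifsOp {X : Type*} {N : ℕ} (w : Fin N → X → X) (p : Fin N → X → ℝ)
    (φ : X → ℝ) : X → ℝ :=
  fun x => ∑ i : Fin N, p i x * φ (w i x)

open Set Function

theorem ConcaveOn.comp_of_mapsTo {𝕜 E β γ : Type*} [Semiring 𝕜] [PartialOrder 𝕜]
    [AddCommMonoid E] [AddCommMonoid β] [PartialOrder β] [AddCommMonoid γ] [PartialOrder γ]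
    [SMul 𝕜 E] [SMul 𝕜 β] [SMul 𝕜 γ] {s : Set E} {t : Set β} {f : E → β} {g : β → γ}
    (hg : ConcaveOn 𝕜 t g) (hg' : MonotoneOn g t) (hf : ConcaveOn 𝕜 s f)
    (hst : MapsTo f s t) : ConcaveOn 𝕜 s (g ∘ f) :=
  ⟨hf.1, fun _ hx _ hy _ _ ha hb hab =>
    (hg.2 (hst hx) (hst hy) ha hb hab).trans <|
      hg' (hg.1 (hst hx) (hst hy) ha hb hab) (hst <| hf.1 hx hy ha hb hab)
        (hf.2 hx hy ha hb hab)⟩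

theorem MonotoneOn.iterate {α : Type*} [Preorder α] {f : α → α} {s : Set α}
    (hf : MonotoneOn f s) (hs : MapsTo f s s) (n : ℕ) : MonotoneOn f^[n] s := by
  induction n with
  | zero => exact monotoneOn_id
  | succ n ih =>
    rw [iterate_succ']
    exact hf.comp ih (hs.iterate n)

theorem iterate_le_self_of_mapsTo {α : Type*} [Preorder α] {f : α → α} {s : Set α}
    (hs : MapsTo f s s) (hf : ∀ x ∈ s, f x ≤ x) (n : ℕ) {x : α} (hx : x ∈ s) :
    f^[n] x ≤ x := by
  induction n with
  | zero => exact le_rfl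
  | succ n ih =>
    rw [iterate_succ_apply']
    exact (hf _ (hs.iterate n hx)).trans ih

section Operator

variable {X : Type*} {N : ℕ} {w : Fin N → X → X} {p : Fin N → X → ℝ}

theorem abs_ifsOp_le (hp : ∀ i x, 0 ≤ p i x) (hpsum : ∀ x, ∑ i, p i x = 1) {ψ : X → ℝ}
    {C : ℝ} (hψ : ∀ x, |ψ x| ≤ C) (x : X) : |ifsOp w p ψ x| ≤ C :=
  calc |ifsOp w p ψ x| ≤ ∑ i, p i x * C :=
        (Finset.abs_sum_le_sum_abs _ _).trans <| Finset.sum_le_sum fun i _ => by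
          rw [abs_mul, abs_of_nonneg (hp i x)]
          exact mul_le_mul_of_nonneg_left (hψ _) (hp i x)
    _ = C := by rw [← Finset.sum_mul, hpsum, one_mul]

theorem abs_iterate_ifsOp_le (hp : ∀ i x, 0 ≤ p i x) (hpsum : ∀ x, ∑ i, p i x = 1)
    {ψ : X → ℝ} {C : ℝ} (hψ : ∀ x, |ψ x| ≤ C) (n : ℕ) (x : X) :
    |(ifsOp w p)^[n] ψ x| ≤ C := by
  induction n generalizing x with
  | zero => exact hψ x
  | succ n ih =>
    rw [iterate_succ_apply']
    exact abs_ifsOp_le hp hpsum ih x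

variable [PseudoMetricSpace X] {r ω : ℝ → ℝ}

theorem abs_ifsOp_sub_le (hp : ∀ i x, 0 ≤ p i x) (hpsum : ∀ x, ∑ i, p i x = 1)
    (hcontr : ∀ x y, ∑ i, p i x * dist (w i x) (w i y) ≤ r (dist x y))
    (hplip : ∀ x y, ∑ i, |p i x - p i y| ≤ ω (dist x y))
    {g : ℝ → ℝ} (hg : ConcaveOn ℝ (Ici 0) g) (hgm : MonotoneOn g (Ici 0))
    {ψ : X → ℝ} {C : ℝ} (hψ : ∀ x, |ψ x| ≤ C) (hψg : ∀ x y, |ψ x - ψ y| ≤ g (dist x y))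
    (x y : X) :
    |ifsOp w p ψ x - ifsOp w p ψ y| ≤ g (r (dist x y)) + C * ω (dist x y) := by
  have hsplit : ifsOp w p ψ x - ifsOp w p ψ y
      = ∑ i, p i x * (ψ (w i x) - ψ (w i y)) + ∑ i, (p i x - p i y) * ψ (w i y) := by
    simp only [ifsOp, ← Finset.sum_add_distrib, ← Finset.sum_sub_distrib]
    exact Finset.sum_congr rfl fun i _ => by ring
  have hmean_nonneg : 0 ≤ ∑ i, p i x * dist (w i x) (w i y) :=
    Finset.sum_nonneg fun i _ => mul_nonneg (hp i x) dist_nonneg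
  have hjensen : |∑ i, p i x * (ψ (w i x) - ψ (w i y))| ≤ g (r (dist x y)) :=
    calc |∑ i, p i x * (ψ (w i x) - ψ (w i y))|
        ≤ ∑ i, p i x * g (dist (w i x) (w i y)) :=
          (Finset.abs_sum_le_sum_abs _ _).trans <| Finset.sum_le_sum fun i _ => by
            rw [abs_mul, abs_of_nonneg (hp i x)]
            exact mul_le_mul_of_nonneg_left (hψg _ _) (hp i x)
      _ ≤ g (∑ i, p i x * dist (w i x) (w i y)) :=
          hg.le_map_sum (fun i _ => hp i x) (hpsum x) fun i _ => dist_nonneg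
      _ ≤ g (r (dist x y)) :=
          hgm hmean_nonneg (hmean_nonneg.trans (hcontr x y)) (hcontr x y)
  have hweights : |∑ i, (p i x - p i y) * ψ (w i y)| ≤ C * ω (dist x y) :=
    calc |∑ i, (p i x - p i y) * ψ (w i y)| ≤ ∑ i, |p i x - p i y| * C :=
          (Finset.abs_sum_le_sum_abs _ _).trans <| Finset.sum_le_sum fun i _ => by
            rw [abs_mul]
            exact mul_le_mul_of_nonneg_left (hψ _) (abs_nonneg _)
      _ ≤ ω (dist x y) * C := by
          rw [← Finset.sum_mul]
          exact mul_le_mul_of_nonneg_right (hplip x y) ((abs_nonneg _).trans (hψ x))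
      _ = C * ω (dist x y) := mul_comm _ _
  rw [hsplit]
  exact (abs_add_le _ _).trans (add_le_add hjensen hweights)

end Operator

def ifsModulus (K C : ℝ) (r ω : ℝ → ℝ) : ℕ → ℝ → ℝ
  | 0, t => K * t
  | n + 1, t => ifsModulus K C r ω n (r t) + C * ω t

section Modulus

variable {K C : ℝ} {r ω : ℝ → ℝ}

theorem ifsModulus_eq (n : ℕ) (t : ℝ) :
    ifsModulus K C r ω n t = K * r^[n] t + C * ∑ k ∈ Finset.range n, ω (r^[k] t) := by
  induction n generalizing t with
  | zero => simp [ifsModulus]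
  | succ n ih =>
    rw [ifsModulus, ih, Finset.sum_range_succ', iterate_succ_apply]
    simp only [iterate_succ_apply, iterate_zero_apply]
    ring

theorem monotoneOn_ifsModulus (hK : 0 ≤ K) (hC : 0 ≤ C) (hr : MapsTo r (Ici 0) (Ici 0))
    (hrm : MonotoneOn r (Ici 0)) (hωm : MonotoneOn ω (Ici 0)) (n : ℕ) :
    MonotoneOn (ifsModulus K C r ω n) (Ici 0) := by
  induction n with
  | zero => exact fun s _ t _ hst => mul_le_mul_of_nonneg_left hst hK
  | succ n ih =>
    exact (ih.comp hrm hr).add fun s hs t ht hst => mul_le_mul_of_nonneg_left (hωm hs ht hst) hC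

theorem concaveOn_ifsModulus (hK : 0 ≤ K) (hC : 0 ≤ C) (hr : MapsTo r (Ici 0) (Ici 0))
    (hrm : MonotoneOn r (Ici 0)) (hrc : ConcaveOn ℝ (Ici 0) r)
    (hωm : MonotoneOn ω (Ici 0)) (hωc : ConcaveOn ℝ (Ici 0) ω) (n : ℕ) :
    ConcaveOn ℝ (Ici 0) (ifsModulus K C r ω n) := by
  induction n with
  | zero => exact (concaveOn_id (convex_Ici 0)).smul hK
  | succ n ih =>
    exact (ih.comp_of_mapsTo (monotoneOn_ifsModulus hK hC hr hrm hωm n) hrc hr).add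
      (hωc.smul hC)

variable {t₀ : ℝ}

theorem iterate_le_self_of_mem_Icc (hr : MapsTo r (Ici 0) (Ici 0))
    (hrle : ∀ t ∈ Icc 0 t₀, r t ≤ t) (k : ℕ) {t : ℝ} (ht : t ∈ Icc 0 t₀) : r^[k] t ≤ t :=
  iterate_le_self_of_mapsTo (s := Icc 0 t₀) (fun s hs => ⟨hr hs.1, (hrle s hs).trans hs.2⟩) hrle
    k ht

theorem comp_iterate_mem_Icc (hr : MapsTo r (Ici 0) (Ici 0)) (hrm : MonotoneOn r (Ici 0))
    (hωnn : ∀ t, 0 ≤ t → 0 ≤ ω t) (hωm : MonotoneOn ω (Ici 0)) (k : ℕ) {t : ℝ}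
    (ht : t ∈ Icc 0 t₀) : ω (r^[k] t) ∈ Icc 0 (ω (r^[k] t₀)) :=
  have hrk : r^[k] t ≤ r^[k] t₀ := (hrm.iterate hr k) ht.1 (ht.1.trans ht.2) ht.2
  ⟨hωnn _ (hr.iterate k ht.1), hωm (hr.iterate k ht.1) (hr.iterate k (ht.1.trans ht.2)) hrk⟩

theorem ifsModulus_le_tsum (hK : 0 ≤ K) (hC : 0 ≤ C) (hr : MapsTo r (Ici 0) (Ici 0))
    (hrm : MonotoneOn r (Ici 0)) (hrle : ∀ t ∈ Icc 0 t₀, r t ≤ t)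
    (hωnn : ∀ t, 0 ≤ t → 0 ≤ ω t) (hωm : MonotoneOn ω (Ici 0))
    (hsum : Summable fun k => ω (r^[k] t₀)) (n : ℕ) {t : ℝ} (ht : t ∈ Icc 0 t₀) :
    ifsModulus K C r ω n t ≤ K * t + C * ∑' k, ω (r^[k] t) := by
  have hbound k := comp_iterate_mem_Icc hr hrm hωnn hωm k ht
  rw [ifsModulus_eq]
  gcongr
  · exact iterate_le_self_of_mem_Icc hr hrle n ht
  · exact (hsum.of_nonneg_of_le (fun k => (hbound k).1) fun k => (hbound k).2).sum_le_tsum _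
      fun k _ => (hbound k).1

theorem tendsto_tsum_comp_iterate (hr : MapsTo r (Ici 0) (Ici 0)) (hrm : MonotoneOn r (Ici 0))
    (ht₀ : 0 < t₀) (hrle : ∀ t ∈ Icc 0 t₀, r t ≤ t) (hω0 : ω 0 = 0)
    (hωnn : ∀ t, 0 ≤ t → 0 ≤ ω t) (hωm : MonotoneOn ω (Ici 0))
    (hωc : ContinuousWithinAt ω (Ici 0) 0) (hsum : Summable fun k => ω (r^[k] t₀)) :
    Tendsto (fun t => ∑' k, ω (r^[k] t)) (𝓝[≥] 0) (𝓝 0) := by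
  have hnear : Icc 0 t₀ ∈ 𝓝[≥] (0 : ℝ) := Icc_mem_nhdsGE ht₀
  have hiter (k : ℕ) : Tendsto r^[k] (𝓝[≥] 0) (𝓝[≥] 0) := by
    refine tendsto_nhdsWithin_iff.2 ⟨?_, eventually_mem_nhdsWithin.mono fun t ht => hr.iterate k ht⟩
    refine tendsto_of_tendsto_of_tendsto_of_le_of_le' tendsto_const_nhds
      (tendsto_nhdsWithin_of_tendsto_nhds tendsto_id) ?_ ?_
    · exact eventually_mem_nhdsWithin.mono fun t ht => hr.iterate k ht
    · exact mem_of_superset hnear fun t ht => iterate_le_self_of_mem_Icc hr hrle k ht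
  have hterm (k : ℕ) : Tendsto (fun t => ω (r^[k] t)) (𝓝[≥] 0) (𝓝 0) := by
    simpa only [hω0, Function.comp_def] using hωc.tendsto.comp (hiter k)
  have hdom : ∀ᶠ t in 𝓝[≥] 0, ∀ k, ‖ω (r^[k] t)‖ ≤ ω (r^[k] t₀) :=
    mem_of_superset hnear fun t ht k => by
      have hk := comp_iterate_mem_Icc hr hrm hωnn hωm k ht
      rw [Real.norm_of_nonneg hk.1]
      exact hk.2
  simpa only [tsum_zero] using tendsto_tsum_of_dominated_convergence hsum hterm hdom

end Modulus

theorem abs_iterate_ifsOp_sub_le {X : Type*} [PseudoMetricSpace X] {N : ℕ}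
    {w : Fin N → X → X} {p : Fin N → X → ℝ} {r ω : ℝ → ℝ}
    (hp : ∀ i x, 0 ≤ p i x) (hpsum : ∀ x, ∑ i, p i x = 1)
    (hcontr : ∀ x y, ∑ i, p i x * dist (w i x) (w i y) ≤ r (dist x y))
    (hplip : ∀ x y, ∑ i, |p i x - p i y| ≤ ω (dist x y))
    (hr : MapsTo r (Ici 0) (Ici 0)) (hrm : MonotoneOn r (Ici 0)) (hrc : ConcaveOn ℝ (Ici 0) r)
    (hωm : MonotoneOn ω (Ici 0)) (hωc : ConcaveOn ℝ (Ici 0) ω)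
    {φ : X → ℝ} {K : NNReal} (hφK : LipschitzWith K φ) {C : ℝ} (hφC : ∀ x, |φ x| ≤ C)
    (n : ℕ) (x y : X) :
    |(ifsOp w p)^[n] φ x - (ifsOp w p)^[n] φ y| ≤ ifsModulus K C r ω n (dist x y) := by
  have hC : 0 ≤ C := (abs_nonneg _).trans (hφC x)
  induction n generalizing x y with
  | zero => simpa [ifsModulus, Real.dist_eq] using hφK.dist_le_mul x y
  | succ n ih =>
    rw [iterate_succ_apply']
    exact abs_ifsOp_sub_le hp hpsum hcontr hplip
      (concaveOn_ifsModulus K.coe_nonneg hC hr hrm hrc hωm hωc n)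
      (monotoneOn_ifsModulus K.coe_nonneg hC hr hrm hωm n) (abs_iterate_ifsOp_le hp hpsum hφC n)
      ih x y

theorem ifs_iterates_equicontinuous_general
    {X : Type*} [MetricSpace X]
    (N : ℕ) (w : Fin N → X → X) (p : Fin N → X → ℝ)
    (hp01 : ∀ i x, p i x ∈ Set.Icc (0:ℝ) 1)
    (hpsum : ∀ x, ∑ i : Fin N, p i x = 1)
    (r ω : ℝ → ℝ)
    (hr0 : r 0 = 0) (hω0 : ω 0 = 0)
    (hrnn : ∀ t, 0 ≤ t → 0 ≤ r t) (hωnn : ∀ t, 0 ≤ t → 0 ≤ ω t)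
    (hrmono : MonotoneOn r (Set.Ici 0)) (hωmono : MonotoneOn ω (Set.Ici 0))
    (hrconc : ConcaveOn ℝ (Set.Ici 0) r) (hωconc : ConcaveOn ℝ (Set.Ici 0) ω)
    (hωcont : ContinuousWithinAt ω (Set.Ici 0) 0)
    (T : ℝ) (hT : 0 < T)
    (hseries : ∀ t : ℝ, 0 < t → t < T →
      (Summable fun n : ℕ => ω (r^[n + 1] t)) ∧ r t < t)
    (hcontr : ∀ x y : X, ∑ i : Fin N, p i x * dist (w i x) (w i y) ≤ r (dist x y))
    (hplip : ∀ x y : X, ∑ i : Fin N, |p i x - p i y| ≤ ω (dist x y)) :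
    ∀ φ : X → ℝ, (∃ K : NNReal, LipschitzWith K φ) → (∃ C : ℝ, ∀ x, |φ x| ≤ C) →
      ∀ x₀ : X, ∀ ε : ℝ, 0 < ε → ∃ δ > 0, ∀ y : X, dist y x₀ < δ → ∀ n : ℕ,
        |((ifsOp w p)^[n] φ) y - ((ifsOp w p)^[n] φ) x₀| < ε := by
  rintro φ ⟨K, hK⟩ ⟨C, hφC⟩ x₀ ε hε
  have hp0 i x : 0 ≤ p i x := (hp01 i x).1
  have hr : MapsTo r (Ici 0) (Ici 0) := fun t ht => hrnn t ht
  set t₀ := T / 2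
  have ht₀ : 0 < t₀ := half_pos hT
  have hrle : ∀ t ∈ Icc 0 t₀, r t ≤ t := fun t ht => by
    rcases ht.1.eq_or_lt with rfl | htpos
    · exact hr0.le
    · exact (hseries t htpos (ht.2.trans_lt (half_lt_self hT))).2.le
  have hsum : Summable fun k => ω (r^[k] t₀) :=
    (summable_nat_add_iff 1).1 (hseries t₀ ht₀ (half_lt_self hT)).1
  have hsmall : Tendsto (fun t => K * t + C * ∑' k, ω (r^[k] t)) (𝓝[≥] 0) (𝓝 0) := by
    simpa using ((tendsto_nhdsWithin_of_tendsto_nhds tendsto_id).const_mul (K : ℝ)).add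
      ((tendsto_tsum_comp_iterate hr hrmono ht₀ hrle hω0 hωnn hωmono hωcont hsum).const_mul C)
  obtain ⟨δ, hδ, hδε⟩ := Metric.tendsto_nhdsWithin_nhds.1 hsmall ε hε
  refine ⟨min δ t₀, lt_min hδ ht₀, fun y hy n => ?_⟩
  have hdist : dist y x₀ ∈ Icc 0 t₀ := ⟨dist_nonneg, (hy.trans_le (min_le_right _ _)).le⟩
  have hyδ : dist (dist y x₀) 0 < δ := by
    simpa [Real.dist_eq, abs_of_nonneg hdist.1] using hy.trans_le (min_le_left _ _)
  calc |(ifsOp w p)^[n] φ y - (ifsOp w p)^[n] φ x₀|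
      ≤ ifsModulus K C r ω n (dist y x₀) :=
        abs_iterate_ifsOp_sub_le hp0 hpsum hcontr hplip hr hrmono hrconc hωmono hωconc hK hφC n y x₀
    _ ≤ K * dist y x₀ + C * ∑' k, ω (r^[k] (dist y x₀)) :=
        ifsModulus_le_tsum K.coe_nonneg ((abs_nonneg _).trans (hφC x₀)) hr hrmono hrle hωnn hωmono
          hsum n hdist
    _ < ε := (le_abs_self _).trans_lt (by simpa [Real.dist_eq] using hδε hdist.1 hyδ)

/-- **Equicontinuity of the iterates of an IFS transition operator.** Under the
(r,ω)-contractivity conditions on a complete metric space, for every bounded Lipschitz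
`φ : X → ℝ` the family of iterates `{Pⁿφ : n ∈ ℕ}` is equicontinuous at every point. -/
theorem ifs_iterates_equicontinuous
    {X : Type*} [MetricSpace X] [CompleteSpace X]
    (N : ℕ) (hN : 1 ≤ N) (w : Fin N → X → X) (p : Fin N → X → ℝ)
    (hw : ∀ i, Continuous (w i)) (hp : ∀ i, Continuous (p i))
    (hp01 : ∀ i x, p i x ∈ Set.Icc (0:ℝ) 1)
    (hpsum : ∀ x, ∑ i : Fin N, p i x = 1)
    (r ω : ℝ → ℝ)
    (hr0 : r 0 = 0) (hω0 : ω 0 = 0)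
    (hrnn : ∀ t, 0 ≤ t → 0 ≤ r t) (hωnn : ∀ t, 0 ≤ t → 0 ≤ ω t)
    (hrmono : MonotoneOn r (Set.Ici 0)) (hωmono : MonotoneOn ω (Set.Ici 0))
    (hrconc : ConcaveOn ℝ (Set.Ici 0) r) (hωconc : ConcaveOn ℝ (Set.Ici 0) ω)
    (hrcont : ContinuousWithinAt r (Set.Ici 0) 0)
    (hωcont : ContinuousWithinAt ω (Set.Ici 0) 0)
    (T : ℝ) (hT : 0 < T)
    (hseries : ∀ t : ℝ, 0 < t → t < T →
      (Summable fun n : ℕ => ω (r^[n + 1] t)) ∧ r t < t)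
    (hcontr : ∀ x y : X, ∑ i : Fin N, p i x * dist (w i x) (w i y) ≤ r (dist x y))
    (hplip : ∀ x y : X, ∑ i : Fin N, |p i x - p i y| ≤ ω (dist x y)) :
    ∀ φ : X → ℝ, (∃ K : NNReal, LipschitzWith K φ) → (∃ C : ℝ, ∀ x, |φ x| ≤ C) →
      ∀ x₀ : X, ∀ ε : ℝ, 0 < ε → ∃ δ > 0, ∀ y : X, dist y x₀ < δ → ∀ n : ℕ,
        |((ifsOp w p)^[n] φ) y - ((ifsOp w p)^[n] φ) x₀| < ε :=
  ifs_iterates_equicontinuous_general N w p hp01 hpsum r ω hr0 hω0 hrnn hωnn hrmono hωmono hrconc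
    hωconc hωcont T hT hseries hcontr hplip
end
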